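/- Let R be an integral domain and f ∈ R nonzero non-invertible. An element of S = R[u,v]/(uv - f) of the form b_l v^l + ... + b_1 v + b_0 with b_i ∈ R is divisible by u in S if and only if every b_i is divisible by f in R. -/

import Mathlib

open MvPolynomial

/-- The suspension ring `S = R[u,v]/(uv - f)`. -/
abbrev Susp (R : Type*) [CommRing R] (f : R) : Type _ :=
  MvPolynomial (Fin 2) R ⧸
    Ideal.span {(X 0 * X 1 - C f : MvPolynomial (Fin 2) R)}

/-- The image of the variable `u` in `S`. -/
noncomputable abbrev suspU (R : Type*) [CommRing R] (f : R) : Susp R f :=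
  Ideal.Quotient.mk _ (X 0)

/-- The image of the variable `v` in `S`. -/
noncomputable abbrev suspV (R : Type*) [CommRing R] (f : R) : Susp R f :=
  Ideal.Quotient.mk _ (X 1)

/-!
Sending `u ↦ f T⁻¹` and `v ↦ T` defines a ring map `S → R[T;T⁻¹]`. It maps `∑ bᵢ vⁱ` to
`∑ bᵢ Tⁱ` and every multiple of `u` to a Laurent polynomial all of whose coefficients are
divisible by `f`, so `u ∣ ∑ bᵢ vⁱ` forces `f ∣ bᵢ`. Conversely `bᵢ = f cᵢ = u v cᵢ`.
-/

open LaurentPolynomial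

namespace Susp

variable (R : Type*) [CommRing R] (f : R)

theorem suspU_mul_suspV : suspU R f * suspV R f = algebraMap R (Susp R f) f := by
  rw [← sub_eq_zero, ← map_mul]
  exact Ideal.Quotient.eq_zero_iff_mem.2 (Ideal.subset_span rfl)

noncomputable def toLaurent : Susp R f →ₐ[R] R[T;T⁻¹] :=
  Ideal.Quotient.liftₐ _ (aeval ![LaurentPolynomial.C f * T (-1), T 1]) fun a ha => by
    obtain ⟨q, rfl⟩ := Ideal.mem_span_singleton'.1 ha
    rw [map_mul, map_sub, map_mul, aeval_X, aeval_X, aeval_C]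
    simp only [Matrix.cons_val_zero, Matrix.cons_val_one]
    rw [mul_assoc, ← T_add, neg_add_cancel, T_zero, mul_one, LaurentPolynomial.C_eq_algebraMap,
      sub_self, mul_zero]

@[simp]
theorem toLaurent_suspU : toLaurent R f (suspU R f) = LaurentPolynomial.C f * T (-1) :=
  (Ideal.Quotient.lift_mk _ _ _).trans (by simp)

@[simp]
theorem toLaurent_suspV : toLaurent R f (suspV R f) = T 1 :=
  (Ideal.Quotient.lift_mk _ _ _).trans (by simp)

variable {R f}

theorem suspU_dvd_algebraMap {r : R} (h : f ∣ r) : suspU R f ∣ algebraMap R (Susp R f) r := by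
  obtain ⟨c, rfl⟩ := h
  rw [map_mul, ← suspU_mul_suspV]
  exact (dvd_mul_right _ _).mul_right _

theorem dvd_coeff_toLaurent_of_suspU_dvd {s : Susp R f} (h : suspU R f ∣ s) (n : ℤ) :
    f ∣ (toLaurent R f s).coeff n := by
  obtain ⟨w, rfl⟩ := h
  rw [map_mul, toLaurent_suspU, mul_assoc, ← LaurentPolynomial.smul_eq_C_mul]
  exact dvd_mul_right _ _

theorem coeff_toLaurent_sum_algebraMap_mul_suspV_pow {s : Finset ℕ} (b : ℕ → R) {i : ℕ}
    (hi : i ∈ s) :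
    (toLaurent R f (∑ j ∈ s, algebraMap R (Susp R f) (b j) * suspV R f ^ j)).coeff i = b i := by
  simp only [map_sum, map_mul, map_pow, AlgHom.commutes, toLaurent_suspV, T_pow, mul_one,
    ← LaurentPolynomial.C_eq_algebraMap, ← single_eq_C_mul_T, AddMonoidAlgebra.coeff_sum,
    Finset.sum_apply', AddMonoidAlgebra.coeff_single, Finsupp.single_apply, Nat.cast_inj,
    Finset.sum_ite_eq', if_pos hi]

end Susp

theorem suspU_dvd_iff_general (R : Type*) [CommRing R] (f : R) (l : ℕ) (b : ℕ → R) :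
    suspU R f ∣ (∑ i ∈ Finset.range (l + 1),
        algebraMap R (Susp R f) (b i) * (suspV R f) ^ i) ↔
      ∀ i ∈ Finset.range (l + 1), f ∣ b i := by
  refine ⟨fun h i hi => ?_, fun h => Finset.dvd_sum fun i hi => ?_⟩
  · simpa only [Susp.coeff_toLaurent_sum_algebraMap_mul_suspV_pow b hi] using
      Susp.dvd_coeff_toLaurent_of_suspU_dvd h i
  · exact (Susp.suspU_dvd_algebraMap (h i hi)).mul_right _

/-- An element `b_l v^l + … + b_1 v + b_0` of `S = R[u,v]/(uv - f)`, with `b_i ∈ R`,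
is divisible by `u` if and only if every `b_i` is divisible by `f` in `R`. -/
theorem suspU_dvd_iff (R : Type*) [CommRing R] [IsDomain R] (f : R)
    (hf0 : f ≠ 0) (hf : ¬ IsUnit f) (l : ℕ) (b : ℕ → R) :
    suspU R f ∣ (∑ i ∈ Finset.range (l + 1),
        algebraMap R (Susp R f) (b i) * (suspV R f) ^ i) ↔
      ∀ i ∈ Finset.range (l + 1), f ∣ b i :=
  suspU_dvd_iff_general R f l b
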